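/- Fix n ∈ ℕ, p ≥ 1, a block decomposition k of {1, …, n}, a radius r > 0, and t ∈ ℕ. For all radii 0 < R_2 ≤ R_1, the probability that t independent uniformly random points of a superball are pairwise 2r-separated is monotone in the radius: (1/vol(B^n_{p,k}(R_1))^t) ∫_{B^n_{p,k}(R_1)^t} 1[‖x_i − x_j‖_{p,k,n} ≥ 2r for all i ≠ j] dx_1 ⋯ dx_t ≥ (1/vol(B^n_{p,k}(R_2))^t) ∫_{B^n_{p,k}(R_2)^t} 1[‖x_i − x_j‖_{p,k,n} ≥ 2r for all i ≠ j] dx_1 ⋯ dx_t. -/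

import Mathlib

open MeasureTheory Filter
open scoped BigOperators ENNReal

/-- The superball norm on `ℝ^n` associated to exponent `p` and a block decomposition
given by `m` blocks with endpoints `k 0 = 0 < k 1 < ⋯ < k m = n`:
`‖x‖ = (∑_{j<m} ‖(x_{k j}, …, x_{k (j+1) - 1})‖₂^p)^(1/p)`. -/
noncomputable def superNorm (p : ℝ) {n : ℕ} (m : ℕ) (k : ℕ → ℕ) (x : Fin n → ℝ) : ℝ :=
  (∑ j ∈ Finset.range m,
      (Real.sqrt (∑ i : Fin n, if k j ≤ (i : ℕ) ∧ (i : ℕ) < k (j + 1) then x i ^ 2 else 0)) ^ p)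
    ^ (1 / p)

/-- `k` is a block decomposition of `{1, …, n}` into `m` blocks. -/
def IsBlockDecomp (n m : ℕ) (k : ℕ → ℕ) : Prop :=
  0 < m ∧ k 0 = 0 ∧ k m = n ∧ ∀ j < m, k j < k (j + 1)

/-- The superball with center `c` and radius `r`. -/
noncomputable def superBall (p : ℝ) {n : ℕ} (m : ℕ) (k : ℕ → ℕ) (c : Fin n → ℝ) (r : ℝ) :
    Set (Fin n → ℝ) :=
  {y | superNorm p m k (y - c) ≤ r}

/-- `P` is the set of centers of a translative packing of superballs of radius `r`. -/
def IsSuperballPacking (p : ℝ) {n : ℕ} (m : ℕ) (k : ℕ → ℕ) (r : ℝ)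
    (P : Set (Fin n → ℝ)) : Prop :=
  ∀ x ∈ P, ∀ y ∈ P, x ≠ y → 2 * r ≤ superNorm p m k (x - y)

/-- The translative packing density of superballs of radius `r` in `ℝ^n`. -/
noncomputable def packingDensity (p : ℝ) (n m : ℕ) (k : ℕ → ℕ) (r : ℝ) : ℝ :=
  limsup (fun R : ℝ =>
      ⨆ P : {P : Set (Fin n → ℝ) // IsSuperballPacking p m k r P},
        (volume ((⋃ x ∈ P.1, superBall p m k x r) ∩ superBall p m k 0 R)).toReal /
          (volume (superBall p m k (0 : Fin n → ℝ) R)).toReal) atTop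

/-- The canonical hard superball model partition function `Ẑ_S(t)`. -/
noncomputable def Zhat (p : ℝ) {n : ℕ} (m : ℕ) (k : ℕ → ℕ) (r : ℝ) (S : Set (Fin n → ℝ))
    (t : ℕ) : ℝ :=
  ((t.factorial : ℝ))⁻¹ *
    ∫ x : Fin t → Fin n → ℝ in Set.univ.pi fun _ => S,
      Set.indicator
        {y : Fin t → Fin n → ℝ | ∀ i j : Fin t, i ≠ j → 2 * r ≤ superNorm p m k (y i - y j)}
        (fun _ => (1 : ℝ)) x

/-- The grand canonical hard superball model partition function `Z_S(λ)`. -/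
noncomputable def Zgc (p : ℝ) {n : ℕ} (m : ℕ) (k : ℕ → ℕ) (r : ℝ) (S : Set (Fin n → ℝ))
    (lam : ℝ) : ℝ :=
  ∑' t : ℕ, lam ^ t * Zhat p m k r S t

/-- The expected packing density `α_S(λ)` of the hard superball model. -/
noncomputable def alphaDen (p : ℝ) {n : ℕ} (m : ℕ) (k : ℕ → ℕ) (r : ℝ) (S : Set (Fin n → ℝ))
    (lam : ℝ) : ℝ :=
  lam * deriv (Zgc p m k r S) lam / ((volume S).toReal * Zgc p m k r S lam)

/-!
Dilation by `c > 0` maps the superball of radius `R` onto that of radius `c R` and maps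
`r / c`-separated configurations onto `r`-separated ones. Both the configuration volume and
the `t`-th power of the ball volume pick up the factor `c ^ (t n)`, so the separation probability
at radius `c R` for separation `r` equals the one at radius `R` for separation `r / c`. With
`c = R₁ / R₂ ≥ 1` and `r / c ≤ r` the inequality follows, because fewer configurations are
`r`-separated than `r / c`-separated.
-/

open scoped Pointwise

theorem MeasureTheory.Measure.addHaar_real_smul_of_nonneg {E : Type*} [NormedAddCommGroup E]
    [NormedSpace ℝ E] [MeasurableSpace E] [BorelSpace E] [FiniteDimensional ℝ E]
    (μ : Measure E) [μ.IsAddHaarMeasure] {c : ℝ} (hc : 0 ≤ c) (s : Set E) :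
    μ.real (c • s) = c ^ Module.finrank ℝ E * μ.real s := by
  rw [measureReal_def, μ.addHaar_smul_of_nonneg hc, ENNReal.toReal_mul,
    ENNReal.toReal_ofReal (by positivity), measureReal_def]

lemma IsBlockDecomp.exists_mem_block {n m : ℕ} {k : ℕ → ℕ} (hk : IsBlockDecomp n m k)
    (i : Fin n) : ∃ j < m, k j ≤ i ∧ i < k (j + 1) := by
  obtain ⟨-, hk0, hkm, -⟩ := hk
  set j := Nat.findGreatest (fun j => k j ≤ i) m
  have hkj : k j ≤ i :=
    Nat.findGreatest_spec (P := fun j => k j ≤ i) (Nat.zero_le m) (by simp [hk0])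
  have hjm : j < m := by
    refine (Nat.findGreatest_le m).lt_of_ne fun h => ?_
    rw [show j = m from h, hkm] at hkj
    omega
  refine ⟨j, hjm, hkj, ?_⟩
  by_contra! h
  have : j + 1 ≤ j := Nat.le_findGreatest hjm h
  omega

section superNorm

variable {p : ℝ} {n m : ℕ} {k : ℕ → ℕ}

lemma measurable_superNorm : Measurable (superNorm p (n := n) m k) := by
  refine (Finset.measurable_sum _ fun j _ => ?_).pow_const _
  refine (Measurable.sqrt (Finset.measurable_sum _ fun i _ => ?_)).pow_const _
  split_ifs <;> fun_prop

lemma superNorm_smul (hp : 0 < p) {c : ℝ} (hc : 0 ≤ c) (x : Fin n → ℝ) :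
    superNorm p m k (c • x) = c * superNorm p m k x := by
  have hblock : ∀ j, (∑ i : Fin n,
      if k j ≤ (i : ℕ) ∧ (i : ℕ) < k (j + 1) then (c • x) i ^ 2 else 0) =
      c ^ 2 * ∑ i : Fin n, if k j ≤ (i : ℕ) ∧ (i : ℕ) < k (j + 1) then x i ^ 2 else 0 := by
    simp [Finset.mul_sum, mul_pow]
  simp only [superNorm, hblock, Real.sqrt_mul (sq_nonneg c), Real.sqrt_sq hc,
    Real.mul_rpow hc (Real.sqrt_nonneg _), ← Finset.mul_sum]
  rw [Real.mul_rpow (by positivity) (by positivity), ← Real.rpow_mul hc, mul_one_div_cancel hp.ne',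
    Real.rpow_one]

lemma abs_le_superNorm (hp : 0 < p) (hk : IsBlockDecomp n m k) (x : Fin n → ℝ) (i : Fin n) :
    |x i| ≤ superNorm p m k x := by
  obtain ⟨j, hjm, hij⟩ := hk.exists_mem_block i
  set block : ℕ → ℝ := fun j => Real.sqrt
    (∑ i : Fin n, if k j ≤ (i : ℕ) ∧ (i : ℕ) < k (j + 1) then x i ^ 2 else 0)
  have hi_block : |x i| ≤ block j := by
    rw [← Real.sqrt_sq_eq_abs]
    have hterm := Finset.single_le_sum (f := fun i' : Fin n =>
      if k j ≤ (i' : ℕ) ∧ (i' : ℕ) < k (j + 1) then x i' ^ 2 else 0)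
      (fun i' _ => by positivity) (Finset.mem_univ i)
    rw [if_pos hij] at hterm
    exact Real.sqrt_le_sqrt hterm
  have hblock_pow : block j ^ p ≤ ∑ j' ∈ Finset.range m, block j' ^ p :=
    Finset.single_le_sum (f := fun j' => block j' ^ p) (fun j' _ => by positivity)
      (Finset.mem_range.2 hjm)
  calc |x i| ≤ block j := hi_block
    _ = (block j ^ p) ^ (1 / p) := by
      rw [← Real.rpow_mul (by positivity), mul_one_div_cancel hp.ne', Real.rpow_one]
    _ ≤ (∑ j' ∈ Finset.range m, block j' ^ p) ^ (1 / p) := by gcongr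
    _ = superNorm p m k x := rfl

lemma superBall_zero_subset_pi_Icc (hp : 0 < p) (hk : IsBlockDecomp n m k) (R : ℝ) :
    superBall p m k (0 : Fin n → ℝ) R ⊆ Set.univ.pi fun _ => Set.Icc (-R) R := fun y hy i _ => by
  rw [Set.mem_Icc, ← abs_le]
  exact (abs_le_superNorm hp hk y i).trans (by simpa [superBall] using hy)

lemma volume_superBall_zero_ne_top (hp : 0 < p) (hk : IsBlockDecomp n m k) (R : ℝ) :
    volume (superBall p m k (0 : Fin n → ℝ) R) ≠ ∞ :=
  ne_top_of_le_ne_top (by rw [volume_pi_pi]; exact ENNReal.prod_ne_top fun _ _ => by simp)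
    (measure_mono (superBall_zero_subset_pi_Icc hp hk R))

lemma superBall_zero_mul (hp : 0 < p) {c : ℝ} (hc : 0 < c) (R : ℝ) :
    superBall p m k (0 : Fin n → ℝ) (c * R) = c • superBall p m k 0 R := by
  ext y
  simp only [Set.mem_smul_set_iff_inv_smul_mem₀ hc.ne', superBall, Set.mem_ofPred_eq, sub_zero,
    superNorm_smul hp (inv_nonneg.2 hc.le), inv_mul_le_iff₀ hc]

end superNorm

def separatedConfigs (p : ℝ) {n : ℕ} (m : ℕ) (k : ℕ → ℕ) (t : ℕ) (r : ℝ) :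
    Set (Fin t → Fin n → ℝ) :=
  {y | ∀ i j : Fin t, i ≠ j → 2 * r ≤ superNorm p m k (y i - y j)}

noncomputable def separationProb (p : ℝ) (n m : ℕ) (k : ℕ → ℕ) (t : ℕ) (r R : ℝ) : ℝ :=
  ((volume (superBall p m k (0 : Fin n → ℝ) R)).toReal ^ t)⁻¹ *
    ∫ x in Set.univ.pi fun _ : Fin t => superBall p m k (0 : Fin n → ℝ) R,
      (separatedConfigs p m k t r).indicator (fun _ => (1 : ℝ)) x

section separation

variable {p : ℝ} {n m : ℕ} {k : ℕ → ℕ} {t : ℕ}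

lemma measurableSet_separatedConfigs (r : ℝ) :
    MeasurableSet (separatedConfigs p (n := n) m k t r) := by
  simp only [separatedConfigs, Set.ofPred_forall]
  refine .iInter fun i => .iInter fun j => .iInter fun _ => ?_
  exact measurableSet_le measurable_const
    (measurable_superNorm.comp ((measurable_pi_apply i).sub (measurable_pi_apply j)))

lemma separatedConfigs_antitone : Antitone (separatedConfigs p (n := n) m k t) :=
  fun _ _ hrr' _ hy i j hij => le_trans (by linarith) (hy i j hij)

lemma smul_separatedConfigs_div (hp : 0 < p) {c : ℝ} (hc : 0 < c) (r : ℝ) :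
    c • separatedConfigs p (n := n) m k t (r / c) = separatedConfigs p m k t r := by
  ext y
  simp only [Set.mem_smul_set_iff_inv_smul_mem₀ hc.ne', separatedConfigs, Set.mem_ofPred_eq,
    Pi.smul_apply, ← smul_sub, superNorm_smul hp (inv_nonneg.2 hc.le), mul_div_assoc',
    le_inv_mul_iff₀ hc, mul_div_cancel₀ _ hc.ne']

lemma separationProb_eq (r R : ℝ) :
    separationProb p n m k t r R =
      (volume.real (superBall p m k (0 : Fin n → ℝ) R) ^ t)⁻¹ *
        volume.real ((Set.univ.pi fun _ : Fin t => superBall p m k (0 : Fin n → ℝ) R) ∩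
          separatedConfigs p m k t r) := by
  rw [separationProb, setIntegral_indicator (measurableSet_separatedConfigs r), setIntegral_const,
    smul_eq_mul, mul_one]
  rfl

lemma separationProb_mul_radius (hp : 0 < p) {c : ℝ} (hc : 0 < c) (r R : ℝ) :
    separationProb p n m k t r (c * R) = separationProb p n m k t (r / c) R := by
  have hconfigs : (Set.univ.pi fun _ : Fin t => superBall p m k (0 : Fin n → ℝ) (c * R)) ∩
      separatedConfigs p m k t r = c • ((Set.univ.pi fun _ : Fin t => superBall p m k 0 R) ∩
        separatedConfigs p m k t (r / c)) := by
    rw [Set.smul_set_inter₀ hc.ne', smul_separatedConfigs_div hp hc, Set.smul_set_univ_pi]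
    simp only [superBall_zero_mul hp hc]
    rfl
  rw [separationProb_eq, separationProb_eq, hconfigs, superBall_zero_mul hp hc,
    volume.addHaar_real_smul_of_nonneg hc.le, volume.addHaar_real_smul_of_nonneg hc.le]
  simp only [Module.finrank_pi_fintype, Module.finrank_self, Finset.sum_const, Finset.card_univ,
    Fintype.card_fin, smul_eq_mul, mul_one]
  rw [mul_pow, ← pow_mul, mul_comm n t, mul_inv, mul_mul_mul_comm, inv_mul_cancel₀ (by positivity),
    one_mul]

lemma separationProb_antitone (hp : 0 < p) (hk : IsBlockDecomp n m k) (R : ℝ) :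
    Antitone fun r => separationProb p n m k t r R := fun r r' hrr' => by
  simp only [separationProb_eq]
  have hfin : volume (Set.univ.pi fun _ : Fin t => superBall p m k (0 : Fin n → ℝ) R) ≠ ∞ := by
    simp [volume_pi_pi, volume_superBall_zero_ne_top hp hk]
  gcongr
  · exact measure_ne_top_of_subset Set.inter_subset_left hfin
  · exact separatedConfigs_antitone hrr'

end separation

/-- **Inequality (18): monotonicity of the separation probability in the radius.**
Fix `p ≥ 1`, a block decomposition `k` of `{1, …, n}`, `r > 0` and `t ∈ ℕ`. For radii
`0 < R₂ ≤ R₁`, the probability that `t` independent uniformly random points of the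
superball of radius `R` are pairwise `2r`-separated is monotone in `R`. -/
theorem separation_probability_mono (p : ℝ) (hp : 1 ≤ p) (n m : ℕ) (k : ℕ → ℕ)
    (hk : IsBlockDecomp n m k) (r : ℝ) (hr : 0 < r) (t : ℕ)
    (R₁ R₂ : ℝ) (hR₂ : 0 < R₂) (hR : R₂ ≤ R₁) :
    (((volume (superBall p m k (0 : Fin n → ℝ) R₂)).toReal) ^ t)⁻¹ *
        (∫ x : Fin t → Fin n → ℝ in
            Set.univ.pi fun _ => superBall p m k (0 : Fin n → ℝ) R₂,
          Set.indicator
            {y : Fin t → Fin n → ℝ | ∀ i j : Fin t, i ≠ j →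
              2 * r ≤ superNorm p m k (y i - y j)} (fun _ => (1 : ℝ)) x) ≤
      (((volume (superBall p m k (0 : Fin n → ℝ) R₁)).toReal) ^ t)⁻¹ *
        (∫ x : Fin t → Fin n → ℝ in
            Set.univ.pi fun _ => superBall p m k (0 : Fin n → ℝ) R₁,
          Set.indicator
            {y : Fin t → Fin n → ℝ | ∀ i j : Fin t, i ≠ j →
              2 * r ≤ superNorm p m k (y i - y j)} (fun _ => (1 : ℝ)) x) := by
  have hp₀ : 0 < p := zero_lt_one.trans_le hp
  set c := R₁ / R₂
  have hc : 1 ≤ c := (one_le_div hR₂).2 hR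
  calc separationProb p n m k t r R₂
      ≤ separationProb p n m k t (r / c) R₂ :=
        separationProb_antitone hp₀ hk R₂ (div_le_self hr.le hc)
    _ = separationProb p n m k t r (c * R₂) :=
        (separationProb_mul_radius hp₀ (by positivity) r R₂).symm
    _ = separationProb p n m k t r R₁ := by rw [div_mul_cancel₀ R₁ hR₂.ne']
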